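/- arXiv:math/9504209 — 2 statements merged into one kernel-verified Lean document; each statement's English description precedes it below -/
import Mathlib

section
/- For all A, B ∈ SL(2,ℂ) with A ≠ ±1 and B ≠ ±1: 4·max{‖A‖², ‖B‖²} ≥ |tr A|² + |tr B|² + √(‖A − A⁻¹‖² · ‖B − B⁻¹‖² + (|tr A|² − |tr B|²)²). -/
/-!
For `A ∈ SL(2,ℂ)` the inverse is the adjugate, so `A - A⁻¹ = [[a - d, 2b], [2c, d - a]]` and the
parallelogram law gives `‖A - A⁻¹‖² = 4‖A‖² - 2|tr A|²`; moreover `|tr A|² ≤ 2‖A‖²`. After these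
substitutions the inequality only involves the four reals `‖A‖², ‖B‖², |tr A|², |tr B|²`, and it
follows from `(M - p - q)² = (M - 2p)(M - 2q) + (p - q)²` with `M = 4 max(‖A‖², ‖B‖²)`.
-/

open Matrix Real

noncomputable section

abbrev SL2C := Matrix.SpecialLinearGroup (Fin 2) ℂ

/-- The Frobenius (Hilbert–Schmidt) norm of a 2×2 complex matrix. -/
def fnorm (A : Matrix (Fin 2) (Fin 2) ℂ) : ℝ :=
  @norm _ Matrix.frobeniusSeminormedAddCommGroup.toNorm A

instance : TopologicalSpace SL2C :=
  TopologicalSpace.induced (fun g => (g : Matrix (Fin 2) (Fin 2) ℂ)) inferInstance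

/-- A subgroup of `SL(2,ℂ)` is discrete if it is a discrete subspace of `SL(2,ℂ)`. -/
def IsDiscreteSubgroup (Γ : Subgroup SL2C) : Prop := DiscreteTopology Γ

/-- `A` is elliptic of order `n`: `A^n = ±1` but `A^k ≠ ±1` for `1 ≤ k < n`. -/
def IsEllipticOfOrder (A : SL2C) (n : ℕ) : Prop :=
  (A ^ n = 1 ∨ A ^ n = -1) ∧ ∀ k : ℕ, 1 ≤ k → k < n → A ^ k ≠ 1 ∧ A ^ k ≠ -1

/-- `A` is parabolic: `A ≠ ±1` and `tr A = ±2`. -/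
def IsParabolic (A : SL2C) : Prop :=
  A ≠ 1 ∧ A ≠ -1 ∧ (Matrix.trace (A : Matrix (Fin 2) (Fin 2) ℂ) = 2 ∨
    Matrix.trace (A : Matrix (Fin 2) (Fin 2) ℂ) = -2)

/-- `S` and `T` have a common eigenvector in `ℂ²`. -/
def HasCommonEigenvector (S T : SL2C) : Prop :=
  ∃ v : Fin 2 → ℂ, v ≠ 0 ∧ (∃ a : ℂ, (S : Matrix (Fin 2) (Fin 2) ℂ).mulVec v = a • v) ∧
    (∃ b : ℂ, (T : Matrix (Fin 2) (Fin 2) ℂ).mulVec v = b • v)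

/-- A subgroup of `SL(2,ℂ)` is nonelementary if it contains two elements `S`, `T`
with `S^k ≠ ±1 ≠ T^k` for all `k ≥ 1` having no common eigenvector in `ℂ²`. -/
def IsNonelementary (Γ : Subgroup SL2C) : Prop :=
  ∃ S ∈ Γ, ∃ T ∈ Γ, (∀ k : ℕ, 1 ≤ k → S ^ k ≠ 1 ∧ S ^ k ≠ -1) ∧
    (∀ k : ℕ, 1 ≤ k → T ^ k ≠ 1 ∧ T ^ k ≠ -1) ∧ ¬ HasCommonEigenvector S T

/-- The trace parameter `β(A) = tr²(A) - 4`. -/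
def βp (A : SL2C) : ℂ := (Matrix.trace (A : Matrix (Fin 2) (Fin 2) ℂ)) ^ 2 - 4

/-- The commutator parameter `γ(A,B) = tr [A,B] - 2`. -/
def γp (A B : SL2C) : ℂ :=
  Matrix.trace ((A * B * A⁻¹ * B⁻¹ : SL2C) : Matrix (Fin 2) (Fin 2) ℂ) - 2

/-- `PSL(2,ℂ)`, the quotient of `SL(2,ℂ)` by its center `{1, -1}`. -/
abbrev PSL2C := SL2C ⧸ Subgroup.center SL2C

/-- The image in `PSL(2,ℂ)` of a subgroup of `SL(2,ℂ)`. -/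
def pslImage (Γ : Subgroup SL2C) : Subgroup PSL2C :=
  Γ.map (QuotientGroup.mk' (Subgroup.center SL2C))

open Classical in
/-- `t5`: the unique real `t > 1` with
`t (t - cos²(π/5)) + (t-1) √((t+1)(t+1-2 cos²(π/5))) = 1/2`. -/
def t5 : ℝ :=
  if h : ∃ t : ℝ, 1 < t ∧
      t * (t - Real.cos (π / 5) ^ 2) +
        (t - 1) * Real.sqrt ((t + 1) * (t + 1 - 2 * Real.cos (π / 5) ^ 2)) = 1 / 2
  then h.choose else 0

/-- The value `t n = cosh (c n)` where `c n` is the sharp displacement bound for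
discrete nonelementary groups with an elliptic generator of order `n ≥ 3`. -/
def tOf : ℕ → ℝ
  | 3 => (2 * Real.sqrt (8 + 2 * Real.sqrt 5) - (1 + Real.sqrt 5)) / (6 - Real.sqrt 5)
  | 4 => (Real.sqrt (6 + 2 * Real.sqrt 3) - Real.sqrt 3) / (3 - Real.sqrt 3)
  | 5 => t5
  | 6 => 17 / 16
  | n => (5 - 2 * Real.sin (π / n) ^ 2) / (4 + 2 * Real.sin (π / n) ^ 2)

lemma fnorm_sq (A : Matrix (Fin 2) (Fin 2) ℂ) :
    fnorm A ^ 2 = ‖A 0 0‖ ^ 2 + ‖A 0 1‖ ^ 2 + ‖A 1 0‖ ^ 2 + ‖A 1 1‖ ^ 2 := by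
  rw [fnorm, Matrix.frobenius_norm_def, ← Real.sqrt_eq_rpow, Real.sq_sqrt (by positivity)]
  simp only [Fin.sum_univ_two, Real.rpow_two]
  ring

lemma norm_trace_sq_le_two_mul_fnorm_sq (A : Matrix (Fin 2) (Fin 2) ℂ) :
    ‖A.trace‖ ^ 2 ≤ 2 * fnorm A ^ 2 := by
  have hpar := parallelogram_law_with_norm ℝ (A 0 0) (A 1 1)
  rw [fnorm_sq, Matrix.trace_fin_two]
  nlinarith [norm_nonneg (A 0 0 - A 1 1), sq_nonneg ‖A 0 1‖, sq_nonneg ‖A 1 0‖]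

lemma fnorm_sub_adjugate_sq (A : Matrix (Fin 2) (Fin 2) ℂ) :
    fnorm (A - A.adjugate) ^ 2 = 4 * fnorm A ^ 2 - 2 * ‖A.trace‖ ^ 2 := by
  have hpar := parallelogram_law_with_norm ℝ (A 0 0) (A 1 1)
  have h2 : ∀ z : ℂ, ‖z - -z‖ = 2 * ‖z‖ := fun z => by
    rw [sub_neg_eq_add, ← two_mul, norm_mul, Complex.norm_two]
  rw [fnorm_sq, fnorm_sq, Matrix.trace_fin_two, Matrix.adjugate_fin_two]
  simp only [Matrix.sub_apply, Matrix.of_apply, Matrix.cons_val', Matrix.cons_val_zero,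
    Matrix.cons_val_one, Matrix.empty_val', Matrix.cons_val_fin_one, h2, norm_sub_rev (A 1 1)]
  nlinarith

lemma fnorm_sub_inv_sq (A : SL2C) :
    fnorm ((A : Matrix (Fin 2) (Fin 2) ℂ) - ((A⁻¹ : SL2C) : Matrix (Fin 2) (Fin 2) ℂ)) ^ 2
      = 4 * fnorm (A : Matrix (Fin 2) (Fin 2) ℂ) ^ 2
        - 2 * ‖(A : Matrix (Fin 2) (Fin 2) ℂ).trace‖ ^ 2 := by
  rw [Matrix.SpecialLinearGroup.coe_inv, fnorm_sub_adjugate_sq]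

lemma add_add_sqrt_le_four_mul_max {x y p q : ℝ} (hp : p ≤ 2 * x) (hq : q ≤ 2 * y) :
    p + q + √((4 * x - 2 * p) * (4 * y - 2 * q) + (p - q) ^ 2) ≤ 4 * max x y := by
  have hx := le_max_left x y
  have hy := le_max_right x y
  have hprod : (4 * x - 2 * p) * (4 * y - 2 * q)
      ≤ (4 * max x y - 2 * p) * (4 * max x y - 2 * q) :=
    mul_le_mul (by linarith) (by linarith) (by linarith) (by linarith)
  have hsqrt : √((4 * x - 2 * p) * (4 * y - 2 * q) + (p - q) ^ 2) ≤ 4 * max x y - p - q := by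
    rw [Real.sqrt_le_iff]
    exact ⟨by linarith, by nlinarith⟩
  linarith

theorem displacement_lower_bound_general (A B : SL2C) :
    4 * max (fnorm (A : Matrix (Fin 2) (Fin 2) ℂ) ^ 2)
        (fnorm (B : Matrix (Fin 2) (Fin 2) ℂ) ^ 2) ≥
      ‖Matrix.trace (A : Matrix (Fin 2) (Fin 2) ℂ)‖ ^ 2 +
        ‖Matrix.trace (B : Matrix (Fin 2) (Fin 2) ℂ)‖ ^ 2 +
        Real.sqrt
          (fnorm ((A : Matrix (Fin 2) (Fin 2) ℂ) -
              ((A⁻¹ : SL2C) : Matrix (Fin 2) (Fin 2) ℂ)) ^ 2 *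
            fnorm ((B : Matrix (Fin 2) (Fin 2) ℂ) -
              ((B⁻¹ : SL2C) : Matrix (Fin 2) (Fin 2) ℂ)) ^ 2 +
            (‖Matrix.trace (A : Matrix (Fin 2) (Fin 2) ℂ)‖ ^ 2 -
              ‖Matrix.trace (B : Matrix (Fin 2) (Fin 2) ℂ)‖ ^ 2) ^ 2) := by
  rw [fnorm_sub_inv_sq, fnorm_sub_inv_sq]
  exact add_add_sqrt_le_four_mul_max (norm_trace_sq_le_two_mul_fnorm_sq _)
    (norm_trace_sq_le_two_mul_fnorm_sq _)

/-- Lemma 2.15, inequality (2.16). -/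
theorem displacement_lower_bound (A B : SL2C)
    (hA1 : A ≠ 1) (hA2 : A ≠ -1) (hB1 : B ≠ 1) (hB2 : B ≠ -1) :
    4 * max (fnorm (A : Matrix (Fin 2) (Fin 2) ℂ) ^ 2)
        (fnorm (B : Matrix (Fin 2) (Fin 2) ℂ) ^ 2) ≥
      ‖Matrix.trace (A : Matrix (Fin 2) (Fin 2) ℂ)‖ ^ 2 +
        ‖Matrix.trace (B : Matrix (Fin 2) (Fin 2) ℂ)‖ ^ 2 +
        Real.sqrt
          (fnorm ((A : Matrix (Fin 2) (Fin 2) ℂ) -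
              ((A⁻¹ : SL2C) : Matrix (Fin 2) (Fin 2) ℂ)) ^ 2 *
            fnorm ((B : Matrix (Fin 2) (Fin 2) ℂ) -
              ((B⁻¹ : SL2C) : Matrix (Fin 2) (Fin 2) ℂ)) ^ 2 +
            (‖Matrix.trace (A : Matrix (Fin 2) (Fin 2) ℂ)‖ ^ 2 -
              ‖Matrix.trace (B : Matrix (Fin 2) (Fin 2) ℂ)‖ ^ 2) ^ 2) :=
  displacement_lower_bound_general A B

end
end

section
/- For all A, B ∈ SL(2,ℂ) with A ≠ ±1 and B ≠ ±1: ‖A − A⁻¹‖² · ‖B − B⁻¹‖² ≥ 2·(|4·γ(A,B) + β(A)·β(B)| + |4·γ(A,B)| + |β(A)·β(B)|). -/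
/-!
For `A ∈ SL(2,ℂ)` the matrix `X = A - A⁻¹` is traceless, and traceless `2 × 2` matrices are
identified with `ℂ³` by coordinates `u` in which `2‖X‖² = ∑ |uᵢ|²` and `u · u' = 2 tr (X X')`.
With `u, v` the coordinates of `A - A⁻¹, B - B⁻¹` one gets `β(A) = u · u / 4` and
`γ(A,B) = -(u × v) · (u × v) / 64`, hence `4γ + β(A)β(B) = (u · v)² / 16` by Lagrange's identity,
and the theorem becomes `|u · v|² + |(u × v) · (u × v)| + |u · u| |v · v| ≤ 2 |u|² |v|²`.
The cross product term is at most `|u × v|² = |u|² |v|² - |⟨u, v⟩|²` (Hermitian Lagrange identity).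
For the rest write `u = p + iq`, `v = r + is`: then `|u · u|² = |u|⁴ - 4 |p × q|²` and
`|u · v|² = |⟨u, v⟩|² - 4 (p × q) · (r × s)`, and Cauchy–Schwarz for `(p × q) · (r × s)` gives
`|u · v|² + |u · u| |v · v| ≤ |u|² |v|² + |⟨u, v⟩|²`.
-/

open Matrix Real

noncomputable section

open Complex

section DotProduct

variable {ι : Type*} [Fintype ι]

lemma Complex.re_dotProduct (u v : ι → ℂ) :
    (u ⬝ᵥ v).re = (re ∘ u) ⬝ᵥ (re ∘ v) - (im ∘ u) ⬝ᵥ (im ∘ v) := by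
  simp [dotProduct, re_sum, Finset.sum_sub_distrib]

lemma Complex.im_dotProduct (u v : ι → ℂ) :
    (u ⬝ᵥ v).im = (re ∘ u) ⬝ᵥ (im ∘ v) + (im ∘ u) ⬝ᵥ (re ∘ v) := by
  simp [dotProduct, im_sum, Finset.sum_add_distrib]

lemma sum_norm_sq_eq_dotProduct_re_add_im (u : ι → ℂ) :
    ∑ i, ‖u i‖ ^ 2 = (re ∘ u) ⬝ᵥ (re ∘ u) + (im ∘ u) ⬝ᵥ (im ∘ u) := by
  simp [dotProduct, Complex.sq_norm, normSq_apply, Finset.sum_add_distrib]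

lemma ofReal_sum_norm_sq (u : ι → ℂ) : ((∑ i, ‖u i‖ ^ 2 : ℝ) : ℂ) = u ⬝ᵥ star u := by
  simp [dotProduct, mul_conj']

lemma norm_dotProduct_self_le (u : ι → ℂ) : ‖u ⬝ᵥ u‖ ≤ ∑ i, ‖u i‖ ^ 2 :=
  (norm_sum_le _ _).trans_eq (by simp [sq])

lemma norm_dotProduct_self_sq (u : ι → ℂ) :
    ‖u ⬝ᵥ u‖ ^ 2 = (∑ i, ‖u i‖ ^ 2) ^ 2 -
      4 * ((re ∘ u) ⬝ᵥ (re ∘ u) * (im ∘ u) ⬝ᵥ (im ∘ u) - ((re ∘ u) ⬝ᵥ (im ∘ u)) ^ 2) := by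
  rw [Complex.sq_norm, normSq_apply, re_dotProduct, im_dotProduct,
    sum_norm_sq_eq_dotProduct_re_add_im, dotProduct_comm (im ∘ u) (re ∘ u)]
  ring

lemma norm_dotProduct_sq (u v : ι → ℂ) :
    ‖u ⬝ᵥ v‖ ^ 2 = ‖u ⬝ᵥ star v‖ ^ 2 -
      4 * ((re ∘ u) ⬝ᵥ (re ∘ v) * (im ∘ u) ⬝ᵥ (im ∘ v) -
        (re ∘ u) ⬝ᵥ (im ∘ v) * (im ∘ u) ⬝ᵥ (re ∘ v)) := by
  have hre : re ∘ star v = re ∘ v := funext fun i => conj_re (v i)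
  have him : im ∘ star v = -(im ∘ v) := funext fun i => conj_im (v i)
  simp only [Complex.sq_norm, normSq_apply, re_dotProduct, im_dotProduct, hre, him, dotProduct_neg]
  ring

lemma dotProduct_sq_le {R : Type*} [CommSemiring R] [LinearOrder R] [IsStrictOrderedRing R]
    [ExistsAddOfLE R] (a b : ι → R) : (a ⬝ᵥ b) ^ 2 ≤ (a ⬝ᵥ a) * (b ⬝ᵥ b) := by
  simpa only [dotProduct, sq] using Finset.sum_mul_sq_le_sq_mul_sq Finset.univ a b

end DotProduct

lemma abs_le_mul_sub_mul_of_sq_le {R : Type*} [CommRing R] [LinearOrder R] [IsStrictOrderedRing R]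
    {N M q r t : R} (hq : 0 ≤ q) (hqN : q ≤ N) (hr : 0 ≤ r) (hrM : r ≤ M)
    (h : t ^ 2 ≤ (N ^ 2 - q ^ 2) * (M ^ 2 - r ^ 2)) : |t| ≤ N * M - q * r := by
  have hqr : q * r ≤ N * M := mul_le_mul hqN hrM hr (hq.trans hqN)
  refine abs_le_of_sq_le_sq (h.trans ?_) (sub_nonneg.2 hqr)
  nlinarith [sq_nonneg (N * r - q * M)]

lemma star_cross {R : Type*} [CommRing R] [StarRing R] (u v : Fin 3 → R) :
    star (u ⨯₃ v) = star u ⨯₃ star v := by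
  ext i
  fin_cases i <;> simp [cross_apply, star_mul']

lemma sum_norm_sq_cross (u v : Fin 3 → ℂ) :
    ∑ i, ‖(u ⨯₃ v) i‖ ^ 2 = (∑ i, ‖u i‖ ^ 2) * (∑ i, ‖v i‖ ^ 2) - ‖u ⬝ᵥ star v‖ ^ 2 := by
  apply ofReal_injective
  rw [ofReal_sub, ofReal_mul, ofReal_pow, ofReal_sum_norm_sq, ofReal_sum_norm_sq,
    ofReal_sum_norm_sq, star_cross, cross_dot_cross, ← mul_conj', ← star_def, ← star_dotProduct_star, star_star]

lemma norm_dotProduct_sq_add_mul_le (u v : Fin 3 → ℂ) :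
    ‖u ⬝ᵥ v‖ ^ 2 + ‖u ⬝ᵥ u‖ * ‖v ⬝ᵥ v‖ ≤
      (∑ i, ‖u i‖ ^ 2) * (∑ i, ‖v i‖ ^ 2) + ‖u ⬝ᵥ star v‖ ^ 2 := by
  set p := re ∘ u
  set q := im ∘ u
  set r := re ∘ v
  set s := im ∘ v
  have hcs := dotProduct_sq_le (p ⨯₃ q) (r ⨯₃ s)
  rw [cross_dot_cross, cross_dot_cross, cross_dot_cross, dotProduct_comm q p,
    dotProduct_comm s r] at hcs
  have hz := abs_le_mul_sub_mul_of_sq_le (norm_nonneg (u ⬝ᵥ u)) (norm_dotProduct_self_le u)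
    (norm_nonneg (v ⬝ᵥ v)) (norm_dotProduct_self_le v)
    (t := 4 * (p ⬝ᵥ r * q ⬝ᵥ s - p ⬝ᵥ s * q ⬝ᵥ r))
    (by rw [norm_dotProduct_self_sq, norm_dotProduct_self_sq]; linear_combination 16 * hcs)
  rw [norm_dotProduct_sq]
  linarith [neg_le_abs (4 * (p ⬝ᵥ r * q ⬝ᵥ s - p ⬝ᵥ s * q ⬝ᵥ r))]

lemma norm_dotProduct_sq_add_norm_cross_add_norm_mul_le (u v : Fin 3 → ℂ) :
    ‖u ⬝ᵥ v‖ ^ 2 + ‖u ⨯₃ v ⬝ᵥ u ⨯₃ v‖ + ‖(u ⬝ᵥ u) * (v ⬝ᵥ v)‖ ≤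
      2 * ((∑ i, ‖u i‖ ^ 2) * (∑ i, ‖v i‖ ^ 2)) := by
  have hcross := norm_dotProduct_self_le (u ⨯₃ v)
  rw [sum_norm_sq_cross] at hcross
  rw [norm_mul]
  linarith [norm_dotProduct_sq_add_mul_le u v]

section Traceless

def tracelessCoords (X : Matrix (Fin 2) (Fin 2) ℂ) : Fin 3 → ℂ :=
  ![X 0 0 - X 1 1, X 0 1 + X 1 0, I * (X 0 1 - X 1 0)]

lemma fnorm_sq_s10 (X : Matrix (Fin 2) (Fin 2) ℂ) : fnorm X ^ 2 = ∑ i, ∑ j, ‖X i j‖ ^ 2 := by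
  rw [fnorm, frobenius_norm_def, ← Real.rpow_natCast _ 2, ← Real.rpow_mul (by positivity)]
  norm_num

variable {X Y : Matrix (Fin 2) (Fin 2) ℂ}

lemma fnorm_sq_of_trace_eq_zero (hX : X.trace = 0) :
    fnorm X ^ 2 = (∑ i, ‖tracelessCoords X i‖ ^ 2) / 2 := by
  have h11 : X 1 1 = -X 0 0 := by rw [trace_fin_two] at hX; linear_combination hX
  simp only [fnorm_sq_s10, Fin.sum_univ_two, Fin.sum_univ_three, tracelessCoords, h11]
  simp only [Fin.isValue, Complex.sq_norm, normSq_apply, norm_neg, sub_neg_eq_add, cons_val_zero,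
    add_re, add_im, cons_val_one, cons_val, Complex.norm_mul, norm_I, one_mul, sub_re, sub_im]
  ring

lemma tracelessCoords_dotProduct (hX : X.trace = 0) :
    tracelessCoords X ⬝ᵥ tracelessCoords Y = 2 * (X * Y).trace := by
  rw [trace_fin_two] at hX
  simp only [tracelessCoords, dotProduct_cons, head_cons, tail_cons, dotProduct_of_isEmpty,
    add_zero, trace_fin_two, mul_apply, Fin.sum_univ_two]
  linear_combination (X 0 1 - X 1 0) * (Y 0 1 - Y 1 0) * I_sq - (Y 0 0 + Y 1 1) * hX

end Traceless

local notation:1024 "↑ₘ" A:1024 => ((A : SL2C) : Matrix (Fin 2) (Fin 2) ℂ)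

lemma trace_sub_inv (A : SL2C) : (↑ₘA - ↑ₘA⁻¹).trace = 0 := by
  simp only [Matrix.SpecialLinearGroup.coe_inv, adjugate_fin_two, trace_sub, trace_fin_two,
    of_apply, cons_val', cons_val_zero, cons_val_fin_one, cons_val_one]
  ring

lemma trace_sub_inv_mul_self (A : SL2C) :
    ((↑ₘA - ↑ₘA⁻¹) * (↑ₘA - ↑ₘA⁻¹)).trace = 2 * βp A := by
  have hdet := A.det_coe
  rw [det_fin_two] at hdet
  simp only [βp, Matrix.SpecialLinearGroup.coe_inv, adjugate_fin_two, trace_fin_two, mul_apply,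
    Matrix.sub_apply, of_apply, cons_val', cons_val_fin_one, cons_val_zero, Fin.sum_univ_two,
    cons_val_one, sub_neg_eq_add]
  linear_combination (-8) * hdet

lemma γp_eq (A B : SL2C) :
    γp A B = (((↑ₘA - ↑ₘA⁻¹) * (↑ₘB - ↑ₘB⁻¹)).trace ^ 2 -
      ((↑ₘA - ↑ₘA⁻¹) * (↑ₘA - ↑ₘA⁻¹)).trace * ((↑ₘB - ↑ₘB⁻¹) * (↑ₘB - ↑ₘB⁻¹)).trace) / 16 := by
  have hA := A.det_coe
  have hB := B.det_coe
  rw [det_fin_two] at hA hB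
  simp only [γp, Matrix.SpecialLinearGroup.coe_mul, Matrix.SpecialLinearGroup.coe_inv,
    adjugate_fin_two, trace_fin_two, mul_apply, Fin.sum_univ_two, of_apply, cons_val',
    cons_val_fin_one, cons_val_zero, cons_val_one, mul_neg, Matrix.sub_apply, sub_neg_eq_add]
  linear_combination (2 * (B 0 0 * B 1 1 - B 0 1 * B 1 0)) * hA + 2 * hB

lemma fnorm_sub_inv_sq_s10 (A : SL2C) :
    fnorm (↑ₘA - ↑ₘA⁻¹) ^ 2 = (∑ i, ‖tracelessCoords (↑ₘA - ↑ₘA⁻¹) i‖ ^ 2) / 2 :=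
  fnorm_sq_of_trace_eq_zero (trace_sub_inv A)

lemma βp_eq_dotProduct (A : SL2C) :
    βp A = tracelessCoords (↑ₘA - ↑ₘA⁻¹) ⬝ᵥ tracelessCoords (↑ₘA - ↑ₘA⁻¹) / 4 := by
  rw [tracelessCoords_dotProduct (trace_sub_inv A), trace_sub_inv_mul_self]
  ring

lemma γp_eq_cross_dot_cross (A B : SL2C) :
    γp A B = -(tracelessCoords (↑ₘA - ↑ₘA⁻¹) ⨯₃ tracelessCoords (↑ₘB - ↑ₘB⁻¹) ⬝ᵥ
      tracelessCoords (↑ₘA - ↑ₘA⁻¹) ⨯₃ tracelessCoords (↑ₘB - ↑ₘB⁻¹)) / 64 := by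
  simp only [cross_dot_cross, tracelessCoords_dotProduct (trace_sub_inv A),
    tracelessCoords_dotProduct (trace_sub_inv B)]
  rw [trace_mul_comm (↑ₘB - ↑ₘB⁻¹) (↑ₘA - ↑ₘA⁻¹), γp_eq]
  ring

theorem matrix_norm_commutator_bound_general (A B : SL2C) :
    fnorm ((A : Matrix (Fin 2) (Fin 2) ℂ) - ((A⁻¹ : SL2C) : Matrix (Fin 2) (Fin 2) ℂ)) ^ 2 *
        fnorm ((B : Matrix (Fin 2) (Fin 2) ℂ) - ((B⁻¹ : SL2C) : Matrix (Fin 2) (Fin 2) ℂ)) ^ 2 ≥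
      2 * (‖4 * γp A B + βp A * βp B‖ + ‖4 * γp A B‖ +
        ‖βp A * βp B‖) := by
  rw [fnorm_sub_inv_sq_s10, fnorm_sub_inv_sq_s10]
  set u := tracelessCoords (↑ₘA - ↑ₘA⁻¹)
  set v := tracelessCoords (↑ₘB - ↑ₘB⁻¹)
  have h4γ : 4 * γp A B = -(u ⨯₃ v ⬝ᵥ u ⨯₃ v) / 16 := by
    rw [γp_eq_cross_dot_cross]
    ring
  have hββ : βp A * βp B = u ⬝ᵥ u * v ⬝ᵥ v / 16 := by
    rw [βp_eq_dotProduct, βp_eq_dotProduct]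
    ring
  have hsum : 4 * γp A B + βp A * βp B = (u ⬝ᵥ v) ^ 2 / 16 := by
    rw [h4γ, hββ, cross_dot_cross, dotProduct_comm v u]
    ring
  rw [hsum, h4γ, hββ, norm_div, norm_div, norm_div, norm_neg, norm_pow, Complex.norm_ofNat]
  linarith [norm_dotProduct_sq_add_norm_cross_add_norm_mul_le u v]

/-- Lemma 2.15, inequality (2.17):
`m(A)² m(B)² ≥ 2(|4γ + β(A)β(B)| + |4γ| + |β(A)β(B)|)`. -/
theorem matrix_norm_commutator_bound (A B : SL2C)
    (hA1 : A ≠ 1) (hA2 : A ≠ -1) (hB1 : B ≠ 1) (hB2 : B ≠ -1) :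
    fnorm ((A : Matrix (Fin 2) (Fin 2) ℂ) - ((A⁻¹ : SL2C) : Matrix (Fin 2) (Fin 2) ℂ)) ^ 2 *
        fnorm ((B : Matrix (Fin 2) (Fin 2) ℂ) - ((B⁻¹ : SL2C) : Matrix (Fin 2) (Fin 2) ℂ)) ^ 2 ≥
      2 * (‖4 * γp A B + βp A * βp B‖ + ‖4 * γp A B‖ +
        ‖βp A * βp B‖) :=
  matrix_norm_commutator_bound_general A B

end
end
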